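/- Suppose K_* ∈ S is a stationary point of f in the sense that N_{K_*} := R K_* − Bᵀ X_* A_{K_*} = 0, with R + Bᵀ X_* B ⪰ 0. Then for every stabilizing K ∈ S with value matrix X, f(K) − f(K_*) = Tr((X − X_*)Σ) ≥ 0 for any positive definite Σ; i.e., K_* is a global minimizer of f over S. -/

import Mathlib

open Matrix
open scoped ENNReal

/-- Spectral radius of a real square matrix, computed over ℂ. -/
noncomputable def specRad {n : ℕ} (A : Matrix (Fin n) (Fin n) ℝ) : ℝ≥0∞ :=
  spectralRadius ℂ (A.map Complex.ofReal)

/-- A real square matrix is Schur stable if its spectral radius is `< 1`. -/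
def IsSchur {n : ℕ} (A : Matrix (Fin n) (Fin n) ℝ) : Prop := specRad A < 1

/-!
Completing the square in the gain around the stationary `K_*` (where the cross terms vanish
because `N_{K_*} = 0`) turns the two Lyapunov equations into a Lyapunov equation for `X - X_*`
along the closed loop `A - BK`, with inhomogeneity `(K - K_*)ᵀ (R + Bᵀ X_* B) (K - K_*) ⪰ 0`.
The quadratic form of `X - X_*` is therefore nonincreasing along the orbits of `A - BK`, which
tend to zero by Gelfand's formula; hence `X - X_* ⪰ 0`, and `Tr((X - X_*) Σ) = Tr(C (X - X_*) Cᴴ)`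
is nonnegative for `Σ = Cᴴ C`.
-/

open Filter Topology

theorem tendsto_pow_atTop_nhds_zero_of_spectralRadius_lt_one {𝔸 : Type*} [NormedRing 𝔸]
    [NormedAlgebra ℂ 𝔸] [CompleteSpace 𝔸] {a : 𝔸} (h : spectralRadius ℂ a < 1) :
    Tendsto (a ^ ·) atTop (𝓝 0) := by
  obtain ⟨r, hρr, hr1⟩ := ENNReal.lt_iff_exists_nnreal_btwn.mp h
  have hroot :=
    (spectrum.pow_nnnorm_pow_one_div_tendsto_nhds_spectralRadius a).eventually_lt_const hρr
  have hbound : ∀ᶠ N : ℕ in atTop, ‖a ^ N‖ ≤ (r : ℝ) ^ N := by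
    filter_upwards [hroot, eventually_gt_atTop 0] with N hN hN0
    have hNr : (0 : ℝ) < N := by exact_mod_cast hN0
    rw [← ENNReal.coe_rpow_of_nonneg _ (one_div_pos.mpr hNr).le, ENNReal.coe_lt_coe, one_div,
      NNReal.rpow_inv_lt_iff hNr, NNReal.rpow_natCast] at hN
    exact_mod_cast hN.le
  exact squeeze_zero_norm' hbound
    (tendsto_pow_atTop_nhds_zero_of_lt_one r.coe_nonneg (by exact_mod_cast hr1))

theorem IsSchur.tendsto_pow_atTop_nhds_zero {n : ℕ} {A : Matrix (Fin n) (Fin n) ℝ}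
    (hA : IsSchur A) : Tendsto (A ^ ·) atTop (𝓝 0) := by
  -- Any Banach algebra norm on complex matrices will do: the spectral radius does not see it.
  let := Matrix.linftyOpNormedRing (n := Fin n) (α := ℂ)
  let := Matrix.linftyOpNormedAlgebra (n := Fin n) (R := ℂ) (α := ℂ)
  have hmap (N : ℕ) : A ^ N = ((A.map Complex.ofReal) ^ N).map Complex.re := by
    have : (A.map Complex.ofReal) ^ N = (A ^ N).map Complex.ofReal :=
      (map_pow Complex.ofRealHom.mapMatrix A N).symm
    ext i j
    rw [this]
    simp
  have hre : Continuous fun M : Matrix (Fin n) (Fin n) ℂ => M.map Complex.re :=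
    continuous_id.matrix_map Complex.continuous_re
  simpa [Function.comp_def, ← hmap] using
    (hre.tendsto 0).comp (tendsto_pow_atTop_nhds_zero_of_spectralRadius_lt_one hA)

open scoped ComplexOrder in
theorem Matrix.PosSemidef.trace_mul_nonneg {ι 𝕜 : Type*} [Fintype ι] [RCLike 𝕜]
    {A B : Matrix ι ι 𝕜} (hA : A.PosSemidef) (hB : B.PosSemidef) : 0 ≤ (A * B).trace := by
  classical
  open scoped MatrixOrder in
  obtain ⟨C, rfl⟩ := CStarAlgebra.nonneg_iff_eq_star_mul_self.mp hB.nonneg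
  rw [← Matrix.mul_assoc, trace_mul_comm, ← Matrix.mul_assoc]
  exact (hA.mul_mul_conjTranspose_same C).trace_nonneg

theorem IsSchur.posSemidef_of_lyapunov {n : ℕ} {A D M : Matrix (Fin n) (Fin n) ℝ}
    (hA : IsSchur A) (hD : D.IsHermitian) (hM : M.PosSemidef) (h : Aᵀ * D * A + M = D) :
    D.PosSemidef := by
  refine .of_dotProduct_mulVec_nonneg hD fun v => ?_
  rw [star_trivial]
  let q : (Fin n → ℝ) → ℝ := fun w => w ⬝ᵥ D *ᵥ w
  have hstep (w : Fin n → ℝ) : q (A *ᵥ w) ≤ q w := by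
    have hMw := hM.dotProduct_mulVec_nonneg w
    rw [star_trivial] at hMw
    calc q (A *ᵥ w) = w ⬝ᵥ (Aᵀ * D * A) *ᵥ w := by
          simp only [q, ← mulVec_mulVec, dotProduct_mulVec _ Aᵀ, vecMul_transpose]
      _ = q w - w ⬝ᵥ M *ᵥ w := by rw [eq_sub_of_add_eq h, sub_mulVec, dotProduct_sub]
      _ ≤ q w := by linarith
  have hmono (N : ℕ) : q ((A ^ N) *ᵥ v) ≤ q v := by
    induction N with
    | zero => simp
    | succ N ih => exact (pow_succ' A N ▸ mulVec_mulVec v A (A ^ N) ▸ hstep _).trans ih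
  have hq : Continuous fun P : Matrix (Fin n) (Fin n) ℝ => q (P *ᵥ v) := by
    fun_prop
  have hlim : Tendsto (fun N : ℕ => q ((A ^ N) *ᵥ v)) atTop (𝓝 (q (0 *ᵥ v))) :=
    (hq.tendsto 0).comp hA.tendsto_pow_atTop_nhds_zero
  simpa [q] using le_of_tendsto' hlim hmono

section Riccati

variable {ι κ α : Type*} [Fintype ι] [Fintype κ] [CommRing α]
  {A : Matrix ι ι α} {B : Matrix ι κ α} {Q X X' : Matrix ι ι α} {R : Matrix κ κ α}

theorem closedLoop_cost_expand (hR : Rᵀ = R) (hX : Xᵀ = X) (K L : Matrix κ ι α) :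
    (A - B * K)ᵀ * X * (A - B * K) + Kᵀ * R * K =
      (A - B * L)ᵀ * X * (A - B * L) + Lᵀ * R * L + (K - L)ᵀ * (R + Bᵀ * X * B) * (K - L) +
        (K - L)ᵀ * (R * L - Bᵀ * X * (A - B * L)) + (R * L - Bᵀ * X * (A - B * L))ᵀ * (K - L) := by
  simp only [transpose_mul, transpose_sub, hR, hX, transpose_transpose, Matrix.sub_mul,
    Matrix.mul_sub, Matrix.add_mul, Matrix.mul_add, Matrix.mul_assoc]
  abel

theorem lyapunov_sub_of_stationary (hR : Rᵀ = R) (hX' : X'ᵀ = X') {K L : Matrix κ ι α}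
    (hK : (A - B * K)ᵀ * X * (A - B * K) + Q + Kᵀ * R * K = X)
    (hL : (A - B * L)ᵀ * X' * (A - B * L) + Q + Lᵀ * R * L = X')
    (hstat : R * L - Bᵀ * X' * (A - B * L) = 0) :
    (A - B * K)ᵀ * (X - X') * (A - B * K) + (K - L)ᵀ * (R + Bᵀ * X' * B) * (K - L) = X - X' := by
  have hcost := closedLoop_cost_expand (A := A) (B := B) hR hX' K L
  rw [hstat, Matrix.mul_zero, transpose_zero, Matrix.zero_mul, add_zero, add_zero] at hcost
  have hgap : (A - B * K)ᵀ * X' * (A - B * K) + Kᵀ * R * K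
      - ((A - B * L)ᵀ * X' * (A - B * L) + Lᵀ * R * L) =
        (K - L)ᵀ * (R + Bᵀ * X' * B) * (K - L) := by
    rw [hcost]; abel
  calc (A - B * K)ᵀ * (X - X') * (A - B * K) + (K - L)ᵀ * (R + Bᵀ * X' * B) * (K - L)
      = (A - B * K)ᵀ * X * (A - B * K) + Q + Kᵀ * R * K
          - ((A - B * L)ᵀ * X' * (A - B * L) + Q + Lᵀ * R * L) := by
        rw [Matrix.mul_sub (A - B * K)ᵀ X X', Matrix.sub_mul _ _ (A - B * K), ← hgap]
        abel
    _ = X - X' := by rw [hK, hL]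

end Riccati

theorem stmt10_general {n m : ℕ} (A : Matrix (Fin n) (Fin n) ℝ) (B : Matrix (Fin n) (Fin m) ℝ)
    (Q : Matrix (Fin n) (Fin n) ℝ) (R : Matrix (Fin m) (Fin m) ℝ)
    (Sig : Matrix (Fin n) (Fin n) ℝ)
    (hR : Rᵀ = R) (hSig : Sig.PosDef)
    (Ks : Matrix (Fin m) (Fin n) ℝ) (Xs : Matrix (Fin n) (Fin n) ℝ)
    (hXs : Xsᵀ = Xs)
    (hLyaps : (A - B * Ks)ᵀ * Xs * (A - B * Ks) + Q + Ksᵀ * R * Ks = Xs)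
    (hNs : R * Ks - Bᵀ * Xs * (A - B * Ks) = 0)
    (hPs : (R + Bᵀ * Xs * B).PosSemidef) :
    ∀ (K : Matrix (Fin m) (Fin n) ℝ) (X : Matrix (Fin n) (Fin n) ℝ),
      Xᵀ = X → IsSchur (A - B * K) →
      (A - B * K)ᵀ * X * (A - B * K) + Q + Kᵀ * R * K = X →
      (X * Sig).trace - (Xs * Sig).trace = ((X - Xs) * Sig).trace ∧
      0 ≤ ((X - Xs) * Sig).trace := by
  intro K X hX hS hLyap
  have hdiff := lyapunov_sub_of_stationary hR hXs hLyap hLyaps hNs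
  have hgain : ((K - Ks)ᵀ * (R + Bᵀ * Xs * B) * (K - Ks)).PosSemidef := by
    simpa only [conjTranspose_eq_transpose_of_trivial] using
      hPs.conjTranspose_mul_mul_same (K - Ks)
  have hsym : (X - Xs).IsHermitian := by
    rw [IsHermitian, conjTranspose_eq_transpose_of_trivial, transpose_sub, hX, hXs]
  refine ⟨by rw [Matrix.sub_mul, trace_sub], ?_⟩
  exact (hS.posSemidef_of_lyapunov hsym hgain hdiff).trace_mul_nonneg hSig.posSemidef

/-- A stationary stabilizing gain with `R + BᵀX_*B ⪰ 0` is a global minimizer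
of `f(K) = Tr(XΣ)` over the stabilizing gains. -/
theorem stmt10 {n m : ℕ} (A : Matrix (Fin n) (Fin n) ℝ) (B : Matrix (Fin n) (Fin m) ℝ)
    (Q : Matrix (Fin n) (Fin n) ℝ) (R : Matrix (Fin m) (Fin m) ℝ)
    (Sig : Matrix (Fin n) (Fin n) ℝ)
    (hQ : Qᵀ = Q) (hR : Rᵀ = R) (hSig : Sig.PosDef)
    (Ks : Matrix (Fin m) (Fin n) ℝ) (Xs : Matrix (Fin n) (Fin n) ℝ)
    (hXs : Xsᵀ = Xs) (hSs : IsSchur (A - B * Ks))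
    (hLyaps : (A - B * Ks)ᵀ * Xs * (A - B * Ks) + Q + Ksᵀ * R * Ks = Xs)
    (hNs : R * Ks - Bᵀ * Xs * (A - B * Ks) = 0)
    (hPs : (R + Bᵀ * Xs * B).PosSemidef) :
    ∀ (K : Matrix (Fin m) (Fin n) ℝ) (X : Matrix (Fin n) (Fin n) ℝ),
      Xᵀ = X → IsSchur (A - B * K) →
      (A - B * K)ᵀ * X * (A - B * K) + Q + Kᵀ * R * K = X →
      (X * Sig).trace - (Xs * Sig).trace = ((X - Xs) * Sig).trace ∧
      0 ≤ ((X - Xs) * Sig).trace :=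
  stmt10_general A B Q R Sig hR hSig Ks Xs hXs hLyaps hNs hPs
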